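/- arXiv:1805.09323 — 2 statements merged into one kernel-verified Lean document; each statement's English description precedes it below -/
import Mathlib

section
/- Let A be a Banach algebra with a bounded approximate identity (e_α) and X a left Banach A-module such that the module action map m_X : A ⊗ X → X is bounded. Then the kernel of the induced map on the projective tensor product equals the closed linear span of elements of the form (a·b) ⊗ x − a ⊗ (b·x) for a, b ∈ A and x ∈ X. -/
open Filter
open scoped TensorProduct Topology

/-!
Every relation lies in the closed kernel of `m_X`, so `N_X ⊆ ker m_X`. Conversely,
`l_a y - a ⊗ m_X y ∈ N_X` for all `a` and `y`: on a pure
tensor `b ⊗ x` this is the relation `ab ⊗ x - a ⊗ bx`, and both sides are continuous and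
additive in `y`. Hence for `y ∈ ker m_X` every `l_{e_α} y` lies in `N_X`, and `l_{e_α} y → y`:
this holds on pure tensors by the cross-norm bound, and extends to all `y` because the
operators `l_{e_α}` are uniformly bounded.
-/

namespace DenseRange

variable {R M N E : Type*} [CommSemiring R] [AddCommMonoid M] [Module R M]
  [AddCommMonoid N] [Module R N] [AddCommMonoid E] [Module R E] [TopologicalSpace E]

@[elab_as_elim]
theorem induction_on_tmul {j : M ⊗[R] N →ₗ[R] E} (hj : DenseRange j) {p : E → Prop}
    (y : E) (hp : IsClosed {y | p y}) (zero : p 0) (add : ∀ y z, p y → p z → p (y + z))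
    (tmul : ∀ m n, p (j (m ⊗ₜ n))) : p y :=
  hj.induction_on y hp fun t => by
    induction t using TensorProduct.induction_on with
    | zero => simpa using zero
    | tmul m n => exact tmul m n
    | add s t hs ht => simpa using add _ _ hs ht

end DenseRange

section CrossNorm

variable {R M N E : Type*} [CommSemiring R] [SeminormedAddCommGroup M] [Module R M]
  [SeminormedAddCommGroup N] [Module R N] [SeminormedAddCommGroup E] [Module R E]
  {j : M ⊗[R] N →ₗ[R] E}

theorem continuous_map_tmul_const (hj : ∀ m n, ‖j (m ⊗ₜ n)‖ ≤ ‖m‖ * ‖n‖) (n : N) :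
    Continuous fun m : M => j (m ⊗ₜ n) :=
  AddMonoidHomClass.continuous_of_bound (j ∘ₗ (TensorProduct.mk R M N).flip n) ‖n‖
    fun m => (hj m n).trans_eq (mul_comm _ _)

theorem continuous_map_const_tmul (hj : ∀ m n, ‖j (m ⊗ₜ n)‖ ≤ ‖m‖ * ‖n‖) (m : M) :
    Continuous fun n : N => j (m ⊗ₜ n) :=
  AddMonoidHomClass.continuous_of_bound (j ∘ₗ TensorProduct.mk R M N m) ‖m‖ (hj m)

end CrossNorm

theorem tendsto_apply_of_tendsto_apply_tmul {𝕜 M N E F ι : Type*}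
    [NontriviallyNormedField 𝕜] [AddCommMonoid M] [Module 𝕜 M] [AddCommMonoid N] [Module 𝕜 N]
    [SeminormedAddCommGroup E] [NormedSpace 𝕜 E] [SeminormedAddCommGroup F] [NormedSpace 𝕜 F]
    {j : M ⊗[𝕜] N →ₗ[𝕜] E} (hj : DenseRange j) {l : Filter ι} {T : ι → E →L[𝕜] F}
    {S : E →L[𝕜] F} (hT : ∃ C, ∀ i, ‖T i‖ ≤ C)
    (htmul : ∀ m n, Tendsto (fun i => T i (j (m ⊗ₜ n))) l (𝓝 (S (j (m ⊗ₜ n))))) (y : E) :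
    Tendsto (fun i => T i y) l (𝓝 (S y)) := by
  have hequi : Equicontinuous fun i => (T i : E → F) :=
    (NormedSpace.equicontinuous_TFAE T).out 5 1 |>.mp hT
  induction y using hj.induction_on_tmul with
  | hp => exact hequi.isClosed_setOfPred_tendsto S.continuous
  | zero => simpa using tendsto_const_nhds
  | add y z hy hz => simpa using hy.add hz
  | tmul m n => exact htmul m n

section ModuleRelations

variable {𝕜 A X E : Type*} [NontriviallyNormedField 𝕜] [SeminormedRing A] [NormedAlgebra 𝕜 A]
  [NormedAddCommGroup X] [NormedSpace 𝕜 X] [Module A X]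
  [SeminormedAddCommGroup E] [NormedSpace 𝕜 E]

/-- The subspace `N_X` of `E = A ⊗̂ X`. -/
def moduleRelations (j : A ⊗[𝕜] X →ₗ[𝕜] E) : Submodule 𝕜 E :=
  (Submodule.span 𝕜 {z : E | ∃ (a b : A) (x : X),
    z = j ((a * b) ⊗ₜ[𝕜] x) - j (a ⊗ₜ[𝕜] (b • x))}).topologicalClosure

theorem coe_moduleRelations (j : A ⊗[𝕜] X →ₗ[𝕜] E) :
    (moduleRelations j : Set E) = closure (Submodule.span 𝕜 {z : E | ∃ (a b : A) (x : X),
      z = j ((a * b) ⊗ₜ[𝕜] x) - j (a ⊗ₜ[𝕜] (b • x))} : Set E) :=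
  Submodule.topologicalClosure_coe _

theorem isClosed_moduleRelations (j : A ⊗[𝕜] X →ₗ[𝕜] E) : IsClosed (moduleRelations j : Set E) :=
  Submodule.isClosed_topologicalClosure _

theorem moduleRelations_le_ker {j : A ⊗[𝕜] X →ₗ[𝕜] E} {mX : E →L[𝕜] X}
    (hmX : ∀ (a : A) (x : X), mX (j (a ⊗ₜ[𝕜] x)) = a • x) :
    moduleRelations j ≤ LinearMap.ker (mX : E →ₗ[𝕜] X) := by
  refine Submodule.topologicalClosure_minimal _ (Submodule.span_le.mpr ?_) mX.isClosed_ker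
  rintro _ ⟨a, b, x, rfl⟩
  simp [hmX, mul_smul]

theorem mulLeft_sub_tmul_mem_moduleRelations {j : A ⊗[𝕜] X →ₗ[𝕜] E} (hdense : DenseRange j)
    (hcross : ∀ (a : A) (x : X), ‖j (a ⊗ₜ[𝕜] x)‖ ≤ ‖a‖ * ‖x‖) {mX : E →L[𝕜] X}
    (hmX : ∀ (a : A) (x : X), mX (j (a ⊗ₜ[𝕜] x)) = a • x) {a : A} {La : E →L[𝕜] E}
    (hLa : ∀ (b : A) (x : X), La (j (b ⊗ₜ[𝕜] x)) = j ((a * b) ⊗ₜ[𝕜] x)) (y : E) :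
    La y - j (a ⊗ₜ[𝕜] mX y) ∈ moduleRelations j := by
  induction y using hdense.induction_on_tmul with
  | hp =>
    exact (isClosed_moduleRelations j).preimage <|
      La.continuous.sub <| (continuous_map_const_tmul hcross a).comp mX.continuous
  | zero => simp
  | add y z hy hz =>
    convert (moduleRelations j).add_mem hy hz using 1
    simp only [map_add, TensorProduct.tmul_add]
    abel
  | tmul b x =>
    rw [hLa, hmX]
    exact Submodule.le_topologicalClosure _ (Submodule.subset_span ⟨a, b, x, rfl⟩)

end ModuleRelations

theorem kernel_module_action_eq_NX_general
    {A : Type*} [NormedRing A] [NormedAlgebra ℂ A]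
    {X : Type*} [NormedAddCommGroup X] [NormedSpace ℂ X]
    [Module A X]
    -- bounded approximate identity (e_i) for A
    {ι : Type*} (l : Filter ι) [l.NeBot] (e : ι → A) (C : ℝ)
    (hbdd : ∀ i, ‖e i‖ ≤ C)
    (happrox : ∀ a : A, Tendsto (fun i => e i * a) l (𝓝 a))
    -- E realizes the completed projective tensor product A ⊗̂ X
    {E : Type*} [NormedAddCommGroup E] [NormedSpace ℂ E]
    (j : TensorProduct ℂ A X →ₗ[ℂ] E) (hdense : DenseRange j)
    (hcross : ∀ (a : A) (x : X), ‖j (a ⊗ₜ[ℂ] x)‖ ≤ ‖a‖ * ‖x‖)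
    -- the continuous extension m_X of the module action
    (mX : E →L[ℂ] X) (hmX : ∀ (a : A) (x : X), mX (j (a ⊗ₜ[ℂ] x)) = a • x)
    -- the continuous extensions l_a ⊗ id, of norm at most ‖a‖
    (L : A → E →L[ℂ] E)
    (hL : ∀ (a b : A) (x : X), L a (j (b ⊗ₜ[ℂ] x)) = j ((a * b) ⊗ₜ[ℂ] x))
    (hLnorm : ∀ a : A, ‖L a‖ ≤ ‖a‖) :
    {y : E | mX y = 0} =
      closure (Submodule.span ℂ
        {z : E | ∃ (a b : A) (x : X),
          z = j ((a * b) ⊗ₜ[ℂ] x) - j (a ⊗ₜ[ℂ] (b • x))} : Set E) := by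
  rw [← coe_moduleRelations]
  refine subset_antisymm (fun y hy => ?_) fun y hy => moduleRelations_le_ker hmX hy
  have hLe : ∀ i, L (e i) y ∈ moduleRelations j := fun i => by
    simpa [show mX y = 0 from hy] using
      mulLeft_sub_tmul_mem_moduleRelations hdense hcross hmX (hL (e i)) y
  have hconv : Tendsto (fun i => L (e i) y) l (𝓝 y) :=
    tendsto_apply_of_tendsto_apply_tmul (S := .id ℂ E) hdense
      ⟨C, fun i => (hLnorm _).trans (hbdd i)⟩
      (fun b x => by simpa only [hL, ContinuousLinearMap.id_apply, Function.comp_def] using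
        ((continuous_map_tmul_const hcross x).tendsto b).comp (happrox b))
      y
  exact (isClosed_moduleRelations j).mem_of_tendsto hconv
    (Eventually.of_forall hLe)

/-- Let `A` be a Banach algebra with a bounded approximate identity
`(e_α)` and `X` a left Banach `A`-module, and let `E` be (a realization of) the completed
projective tensor product `A ⊗̂ X`: a Banach space with a dense linear embedding `j` of
the algebraic tensor product satisfying the projective cross-norm bound, on which the
left multiplications `l_a ⊗ id` act with norm at most `‖a‖`. Then the kernel of the
induced map `m_X : A ⊗̂ X → X` of the module action equals
`N_X = closed span{(a·b) ⊗ x − a ⊗ (b·x) : a, b ∈ A, x ∈ X}`. -/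
theorem kernel_module_action_eq_NX
    {A : Type*} [NormedRing A] [NormedAlgebra ℂ A] [CompleteSpace A]
    {X : Type*} [NormedAddCommGroup X] [NormedSpace ℂ X] [CompleteSpace X]
    [Module A X] [IsScalarTower ℂ A X]
    (hXbound : ∀ (a : A) (x : X), ‖a • x‖ ≤ ‖a‖ * ‖x‖)
    -- bounded approximate identity (e_i) for A
    {ι : Type*} (l : Filter ι) [l.NeBot] (e : ι → A) (C : ℝ)
    (hbdd : ∀ i, ‖e i‖ ≤ C)
    (happrox : ∀ a : A, Tendsto (fun i => e i * a) l (𝓝 a))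
    -- E realizes the completed projective tensor product A ⊗̂ X
    {E : Type*} [NormedAddCommGroup E] [NormedSpace ℂ E] [CompleteSpace E]
    (j : TensorProduct ℂ A X →ₗ[ℂ] E) (hdense : DenseRange j)
    (hcross : ∀ (a : A) (x : X), ‖j (a ⊗ₜ[ℂ] x)‖ ≤ ‖a‖ * ‖x‖)
    -- the continuous extension m_X of the module action
    (mX : E →L[ℂ] X) (hmX : ∀ (a : A) (x : X), mX (j (a ⊗ₜ[ℂ] x)) = a • x)
    -- the continuous extensions l_a ⊗ id, of norm at most ‖a‖
    (L : A → E →L[ℂ] E)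
    (hL : ∀ (a b : A) (x : X), L a (j (b ⊗ₜ[ℂ] x)) = j ((a * b) ⊗ₜ[ℂ] x))
    (hLnorm : ∀ a : A, ‖L a‖ ≤ ‖a‖) :
    {y : E | mX y = 0} =
      closure (Submodule.span ℂ
        {z : E | ∃ (a b : A) (x : X),
          z = j ((a * b) ⊗ₜ[ℂ] x) - j (a ⊗ₜ[ℂ] (b • x))} : Set E) :=
  kernel_module_action_eq_NX_general l e C hbdd happrox j hdense hcross mX hmX L hL hLnorm
end

section
/- ℓ¹(I) with pointwise multiplication is a Banach algebra, and the bounded linear functionals on ℓ¹(I) ⊗̂ ℓ¹(I) that annihilate the balanced subspace N = closed span{fg ⊗ h − f ⊗ gh} are exactly those of the form F(f ⊗ g) = Σ_i φ(i) f(i) g(i) for some φ ∈ ℓ^∞(I). Hence (ℓ¹(I) ⊗̂_{ℓ¹(I)} ℓ¹(I))* ≅ ℓ^∞(I) isometrically is identified via F ↦ (i ↦ F(δ_i ⊗ δ_i)). -/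
/-!
Pointwise multiplication on `ℓ¹` is contractive because `‖g‖_∞ ≤ ‖g‖₁`. For a balanced `B` and
`i ≠ j`, `B(δᵢ, δⱼ) = B(δᵢ, δⱼδⱼ) = B(δᵢδⱼ, δⱼ) = 0`, so `B` is diagonal on the basis `δᵢ`;
since finitely supported sequences are dense in `ℓ¹`, expanding both arguments in this basis
gives `B(f, g) = Σᵢ B(δᵢ, δᵢ) f(i) g(i)`. The converse is pointwise associativity.
-/

open scoped ENNReal

namespace lp

variable {α : Type*}

theorem norm_le_norm_mul_of_norm_apply_le {E F : α → Type*} [∀ i, NormedAddCommGroup (E i)]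
    [∀ i, NormedSpace ℝ (E i)] [∀ i, NormedAddCommGroup (F i)] {p : ℝ≥0∞} [Fact (1 ≤ p)]
    {x : lp F p} {f : lp E p} {C : ℝ} (hC : 0 ≤ C) (h : ∀ i, ‖x i‖ ≤ ‖f i‖ * C) :
    ‖x‖ ≤ ‖f‖ * C := by
  have hp : p ≠ 0 := (zero_lt_one.trans_le Fact.out).ne'
  calc ‖x‖ ≤ ‖C • f‖ := norm_mono hp fun i => by
        simpa [norm_smul, Real.norm_of_nonneg hC, mul_comm] using h i
    _ = ‖f‖ * C := by rw [norm_smul, Real.norm_of_nonneg hC, mul_comm]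

variable [DecidableEq α] {𝕜 : Type*} [NontriviallyNormedField 𝕜]

theorem smul_single_one (p : ℝ≥0∞) (i : α) (c : 𝕜) :
    c • lp.single (E := fun _ : α => 𝕜) p i 1 = lp.single p i c := by
  rw [← lp.single_smul, smul_eq_mul, mul_one]

theorem hasSum_smul_apply_single {F : Type*} [NormedAddCommGroup F] [NormedSpace 𝕜 F]
    {p : ℝ≥0∞} [Fact (1 ≤ p)] (hp : p ≠ ⊤) (L : lp (fun _ : α => 𝕜) p →L[𝕜] F)
    (f : lp (fun _ : α => 𝕜) p) :
    HasSum (fun i => f i • L (lp.single p i 1)) (L f) :=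
  ((lp.hasSum_single hp f).mapL L).congr_fun fun i => by
    rw [← smul_single_one p i (f i), map_smul]

theorem hasSum_diag_of_apply_single_single_eq_zero {F : Type*} [NormedAddCommGroup F]
    [NormedSpace 𝕜 F] {p q : ℝ≥0∞} [Fact (1 ≤ p)] [Fact (1 ≤ q)] (hp : p ≠ ⊤) (hq : q ≠ ⊤)
    (B : lp (fun _ : α => 𝕜) p →L[𝕜] lp (fun _ : α => 𝕜) q →L[𝕜] F)
    (hB : ∀ i j, i ≠ j → B (lp.single p i 1) (lp.single q j 1) = 0)
    (f : lp (fun _ : α => 𝕜) p) (g : lp (fun _ : α => 𝕜) q) :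
    HasSum (fun i => (f i * g i) • B (lp.single p i 1) (lp.single q i 1)) (B f g) := by
  have hrow (i : α) : B (lp.single p i 1) g = g i • B (lp.single p i 1) (lp.single q i 1) := by
    refine (hasSum_smul_apply_single hq _ g).tsum_eq.symm.trans ?_
    exact tsum_eq_single i fun j hj => by rw [hB i j hj.symm, smul_zero]
  refine (hasSum_smul_apply_single hp (B.flip g) f).congr_fun fun i => ?_
  rw [B.flip_apply, hrow, smul_smul]

theorem norm_apply_single_single_le {F : Type*} [NormedAddCommGroup F] [NormedSpace 𝕜 F]
    {p q : ℝ≥0∞} [Fact (1 ≤ p)] [Fact (1 ≤ q)]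
    (B : lp (fun _ : α => 𝕜) p →L[𝕜] lp (fun _ : α => 𝕜) q →L[𝕜] F) (i j : α) :
    ‖B (lp.single p i 1) (lp.single q j 1)‖ ≤ ‖B‖ := by
  have hp : 0 < p := zero_lt_one.trans_le Fact.out
  have hq : 0 < q := zero_lt_one.trans_le Fact.out
  simpa [lp.norm_single hp, lp.norm_single hq] using
    B.le_opNorm₂ (lp.single p i 1) (lp.single q j 1)

theorem mul_single_one_of_ne {p : ℝ≥0∞}
    (mul : lp (fun _ : α => 𝕜) p → lp (fun _ : α => 𝕜) p → lp (fun _ : α => 𝕜) p)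
    (hmul : ∀ f g i, mul f g i = f i * g i) {i j : α} (hij : i ≠ j) :
    mul (lp.single p i 1) (lp.single p j 1) = 0 := by
  ext k
  simp only [hmul, lp.coeFn_zero, Pi.zero_apply, lp.single_apply]
  by_cases hk : k = i <;> simp [hk, hij]

theorem mul_single_one_self {p : ℝ≥0∞}
    (mul : lp (fun _ : α => 𝕜) p → lp (fun _ : α => 𝕜) p → lp (fun _ : α => 𝕜) p)
    (hmul : ∀ f g i, mul f g i = f i * g i) (i : α) :
    mul (lp.single p i 1) (lp.single p i 1) = lp.single p i 1 := by
  ext k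
  simp only [hmul, lp.single_apply]
  by_cases hk : k = i <;> simp [hk]

theorem apply_single_single_eq_zero_of_balanced {F : Type*} [NormedAddCommGroup F]
    [NormedSpace 𝕜 F] {p : ℝ≥0∞} [Fact (1 ≤ p)]
    (mul : lp (fun _ : α => 𝕜) p → lp (fun _ : α => 𝕜) p → lp (fun _ : α => 𝕜) p)
    (hmul : ∀ f g i, mul f g i = f i * g i)
    {B : lp (fun _ : α => 𝕜) p →L[𝕜] lp (fun _ : α => 𝕜) p →L[𝕜] F}
    (hB : ∀ f g h, B (mul f g) h = B f (mul g h)) {i j : α} (hij : i ≠ j) :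
    B (lp.single p i 1) (lp.single p j 1) = 0 := by
  rw [← mul_single_one_self mul hmul j, ← hB, mul_single_one_of_ne mul hmul hij, map_zero,
    zero_apply]

end lp

/-- `ℓ¹(I)` with pointwise multiplication is a Banach algebra, and a
bounded bilinear functional `B` on `ℓ¹(I) × ℓ¹(I)` (i.e. a functional on
`ℓ¹(I) ⊗̂ ℓ¹(I)`) annihilates the balanced subspace
`N = span{fg ⊗ h − f ⊗ gh}` if and only if it has the form
`B(f, g) = Σ_i φ(i) f(i) g(i)` for the bounded family `φ(i) = B(δ_i, δ_i)`, whose sup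
norm is at most `‖B‖`; thus `(ℓ¹(I) ⊗̂_{ℓ¹(I)} ℓ¹(I))* ≅ ℓ∞(I)` via
`F ↦ (i ↦ F(δ_i ⊗ δ_i))`. -/
theorem l1_module_dual_is_linfty
    {I : Type*} [DecidableEq I]
    (mul : lp (fun _ : I => ℂ) 1 → lp (fun _ : I => ℂ) 1 → lp (fun _ : I => ℂ) 1)
    (hmul : ∀ (f g : lp (fun _ : I => ℂ) 1) (i : I), mul f g i = f i * g i) :
    -- Banach algebra: pointwise multiplication is contractive
    (∀ f g : lp (fun _ : I => ℂ) 1, ‖mul f g‖ ≤ ‖f‖ * ‖g‖)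
    ∧
    ∀ B : lp (fun _ : I => ℂ) 1 →L[ℂ] lp (fun _ : I => ℂ) 1 →L[ℂ] ℂ,
      -- the family φ(i) = B(δ_i ⊗ δ_i) is bounded by ‖B‖ (so lies in ℓ∞(I))
      (∀ i : I,
        ‖B (lp.single 1 i (1 : ℂ)) (lp.single 1 i (1 : ℂ))‖ ≤ ‖B‖)
      ∧
      -- B annihilates N iff B(f,g) = Σ_i φ(i) f(i) g(i) with φ(i) = B(δ_i ⊗ δ_i)
      ((∀ f g h : lp (fun _ : I => ℂ) 1, B (mul f g) h = B f (mul g h))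
        ↔
        (∀ f g : lp (fun _ : I => ℂ) 1,
          B f g = ∑' i : I,
            B (lp.single 1 i (1 : ℂ)) (lp.single 1 i (1 : ℂ)) * (f i * g i))) := by
  refine ⟨fun f g => ?_, fun B => ⟨fun i => lp.norm_apply_single_single_le B i i, ?_⟩⟩
  · refine lp.norm_le_norm_mul_of_norm_apply_le (norm_nonneg g) fun i => ?_
    rw [hmul, norm_mul]
    exact mul_le_mul_of_nonneg_left (lp.norm_apply_le_norm one_ne_zero g i) (norm_nonneg _)
  constructor
  · intro hB f g
    have hdiag := lp.hasSum_diag_of_apply_single_single_eq_zero ENNReal.one_ne_top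
      ENNReal.one_ne_top B (fun _ _ => lp.apply_single_single_eq_zero_of_balanced mul hmul hB) f g
    simp_rw [smul_eq_mul, mul_comm (f _ * g _)] at hdiag
    exact hdiag.tsum_eq.symm
  · intro hdiag f g h
    rw [hdiag, hdiag]
    exact tsum_congr fun i => by rw [hmul, hmul, mul_assoc]
end
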